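/- arXiv:math/0605066 — 2 statements merged into one kernel-verified Lean document; each statement's English description precedes it below -/
import Mathlib

section
/- Let U ⊆ ℂ² be an open connected set containing 0, let ω = (A,B) be a holomorphic 1-form on U and X = (P,Q) a holomorphic vector field on U such that (L_X ω) ∧ ω = 0 identically on U and the function i_X ω = A·P + B·Q is nonvanishing on U. Then the holomorphic 1-form η := (A/(i_X ω), B/(i_X ω)) is closed (i.e. ∂(A/(i_X ω))/∂y = ∂(B/(i_X ω))/∂x on U) and satisfies L_X η = 0 on U. -/
open Complex Filter Topology

noncomputable section

/-- A point of the complex plane `ℂ²`. -/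
abbrev Pt : Type := ℂ × ℂ

/-- A (holomorphic) 1-form `A dx + B dy` on (an open subset of) `ℂ²`,
identified with the pair of functions `(A, B)`. -/
abbrev Form1 : Type := (Pt → ℂ) × (Pt → ℂ)

/-- The complex partial derivative `∂f/∂x`. -/
noncomputable def pdx (f : Pt → ℂ) (p : Pt) : ℂ := fderiv ℂ f p (1, 0)

/-- The complex partial derivative `∂f/∂y`. -/
noncomputable def pdy (f : Pt → ℂ) (p : Pt) : ℂ := fderiv ℂ f p (0, 1)

/-- The derivative `X(f) = P ∂f/∂x + Q ∂f/∂y` of `f` along the vector field `X = (P, Q)`. -/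
noncomputable def Xf (P Q f : Pt → ℂ) (p : Pt) : ℂ := P p * pdx f p + Q p * pdy f p

/-- The contraction `i_X ω = A·P + B·Q` of the 1-form `ω = (A,B)` with `X = (P,Q)`. -/
noncomputable def contr (P Q : Pt → ℂ) (ω : Form1) (p : Pt) : ℂ := ω.1 p * P p + ω.2 p * Q p

/-- The wedge `ω ∧ ω' = A·B' − B·A'` of two 1-forms, as a function. -/
noncomputable def wedge (ω ω' : Form1) (p : Pt) : ℂ := ω.1 p * ω'.2 p - ω.2 p * ω'.1 p

/-- The differential `df = (∂f/∂x, ∂f/∂y)` of a function. -/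
noncomputable def fd (f : Pt → ℂ) : Form1 := (pdx f, pdy f)

/-- A 1-form `(A,B)` is closed on `U` if `∂A/∂y = ∂B/∂x` on `U`. -/
def IsClosedOn (ω : Form1) (U : Set Pt) : Prop := ∀ p ∈ U, pdy ω.1 p = pdx ω.2 p

/-- The Lie derivative `L_X ω` of the 1-form `ω = (A,B)` with respect to `X = (P,Q)`:
`L_X ω = (X(A) + A ∂P/∂x + B ∂Q/∂x, X(B) + A ∂P/∂y + B ∂Q/∂y)`. -/
noncomputable def lie (P Q : Pt → ℂ) (ω : Form1) : Form1 :=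
  (fun p => Xf P Q ω.1 p + ω.1 p * pdx P p + ω.2 p * pdx Q p,
   fun p => Xf P Q ω.2 p + ω.1 p * pdy P p + ω.2 p * pdy Q p)

/-- A 1-form is holomorphic on `U` if both its components are. -/
def AnalyticForm (ω : Form1) (U : Set Pt) : Prop :=
  AnalyticOnNhd ℂ ω.1 U ∧ AnalyticOnNhd ℂ ω.2 U

/-! With `h = i_X ω`, the hypothesis `L_X ω ∧ ω = 0` makes `L_X ω` proportional to `ω`, and
contracting with `X` (Cartan: `i_X L_X ω = X(h)`) identifies the factor as `X(h)/h`. The Leibniz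
rule then gives `L_X (h⁻¹ ω) = h⁻¹ L_X ω - X(h) h⁻² ω = 0`. As `i_X η = 1` on the open set `U`,
Cartan's formula reduces to `0 = L_X η = i_X dη`, and `X ≠ 0` (again because `i_X η = 1`)
forces `dη = 0`. -/

def formAt (ω : Form1) (p : Pt) : ℂ × ℂ := (ω.1 p, ω.2 p)

/-- The coefficient of `dω = curl ω · dx ∧ dy`. -/
def curl (ω : Form1) (p : Pt) : ℂ := pdx ω.2 p - pdy ω.1 p

section PartialDerivatives

variable {f g : Pt → ℂ} {p : Pt}

lemma pdx_add (hf : DifferentiableAt ℂ f p) (hg : DifferentiableAt ℂ g p) :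
    pdx (fun q => f q + g q) p = pdx f p + pdx g p := by
  simp [pdx, fderiv_fun_add hf hg]

lemma pdy_add (hf : DifferentiableAt ℂ f p) (hg : DifferentiableAt ℂ g p) :
    pdy (fun q => f q + g q) p = pdy f p + pdy g p := by
  simp [pdy, fderiv_fun_add hf hg]

lemma pdx_mul (hf : DifferentiableAt ℂ f p) (hg : DifferentiableAt ℂ g p) :
    pdx (fun q => f q * g q) p = f p * pdx g p + g p * pdx f p := by
  simp [pdx, fderiv_fun_mul hf hg]

lemma pdy_mul (hf : DifferentiableAt ℂ f p) (hg : DifferentiableAt ℂ g p) :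
    pdy (fun q => f q * g q) p = f p * pdy g p + g p * pdy f p := by
  simp [pdy, fderiv_fun_mul hf hg]

lemma fderiv_fun_inv_apply (hf : DifferentiableAt ℂ f p) (hfp : f p ≠ 0) (v : Pt) :
    fderiv ℂ (fun q => (f q)⁻¹) p v = -fderiv ℂ f p v / f p ^ 2 := by
  have h := ((hasDerivAt_inv hfp).comp_hasFDerivAt p hf.hasFDerivAt).fderiv
  simp only [Function.comp_def] at h
  simp [h, div_eq_inv_mul]

lemma pdx_inv (hf : DifferentiableAt ℂ f p) (hfp : f p ≠ 0) :
    pdx (fun q => (f q)⁻¹) p = -pdx f p / f p ^ 2 :=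
  fderiv_fun_inv_apply hf hfp (1, 0)

lemma pdy_inv (hf : DifferentiableAt ℂ f p) (hfp : f p ≠ 0) :
    pdy (fun q => (f q)⁻¹) p = -pdy f p / f p ^ 2 :=
  fderiv_fun_inv_apply hf hfp (0, 1)

end PartialDerivatives

section LieDerivative

variable {P Q f g : Pt → ℂ} {ω : Form1} {p : Pt}

lemma Xf_mul (hf : DifferentiableAt ℂ f p) (hg : DifferentiableAt ℂ g p) :
    Xf P Q (fun q => f q * g q) p = f p * Xf P Q g p + g p * Xf P Q f p := by
  simp only [Xf, pdx_mul hf hg, pdy_mul hf hg]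
  ring

lemma Xf_inv (hf : DifferentiableAt ℂ f p) (hfp : f p ≠ 0) :
    Xf P Q (fun q => (f q)⁻¹) p = -Xf P Q f p / f p ^ 2 := by
  simp only [Xf, pdx_inv hf hfp, pdy_inv hf hfp]
  ring

lemma contr_smul : contr P Q (f • ω) = f * contr P Q ω := by
  funext q
  simp only [contr, Prod.smul_fst, Prod.smul_snd, smul_eq_mul, Pi.mul_apply]
  ring

lemma differentiableAt_contr (hA : DifferentiableAt ℂ ω.1 p) (hB : DifferentiableAt ℂ ω.2 p)
    (hP : DifferentiableAt ℂ P p) (hQ : DifferentiableAt ℂ Q p) :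
    DifferentiableAt ℂ (contr P Q ω) p :=
  (hA.fun_mul hP).fun_add (hB.fun_mul hQ)

lemma contr_smul_formAt_eq_of_wedge_eq_zero {α : Form1} (hw : wedge α ω p = 0) :
    contr P Q α p • formAt ω p = contr P Q ω p • formAt α p := by
  simp only [wedge] at hw
  ext <;> simp only [contr, formAt, Prod.smul_fst, Prod.smul_snd, smul_eq_mul]
  · linear_combination -Q p * hw
  · linear_combination P p * hw

/-- Cartan's formula `L_X ω = d(i_X ω) + i_X dω`, where `i_X (c dx ∧ dy) = c (-Q dx + P dy)`. -/
theorem formAt_lie_eq_fd_contr_add (hA : DifferentiableAt ℂ ω.1 p)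
    (hB : DifferentiableAt ℂ ω.2 p) (hP : DifferentiableAt ℂ P p) (hQ : DifferentiableAt ℂ Q p) :
    formAt (lie P Q ω) p = formAt (fd (contr P Q ω)) p + curl ω p • (-Q p, P p) := by
  have hx : pdx (contr P Q ω) p = _ := pdx_add (hA.fun_mul hP) (hB.fun_mul hQ)
  have hy : pdy (contr P Q ω) p = _ := pdy_add (hA.fun_mul hP) (hB.fun_mul hQ)
  rw [pdx_mul hA hP, pdx_mul hB hQ] at hx
  rw [pdy_mul hA hP, pdy_mul hB hQ] at hy
  ext <;> simp only [formAt, lie, fd, Xf, curl, Prod.fst_add, Prod.snd_add,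
    Prod.smul_fst, Prod.smul_snd, smul_eq_mul, hx, hy] <;> ring

theorem contr_lie (hA : DifferentiableAt ℂ ω.1 p) (hB : DifferentiableAt ℂ ω.2 p)
    (hP : DifferentiableAt ℂ P p) (hQ : DifferentiableAt ℂ Q p) :
    contr P Q (lie P Q ω) p = Xf P Q (contr P Q ω) p := by
  have h := formAt_lie_eq_fd_contr_add hA hB hP hQ
  simp only [formAt, Prod.ext_iff, Prod.fst_add, Prod.snd_add, Prod.smul_fst, Prod.smul_snd,
    smul_eq_mul] at h
  rw [contr, h.1, h.2, Xf]
  simp only [fd]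
  ring

theorem formAt_lie_smul (hf : DifferentiableAt ℂ f p) (hA : DifferentiableAt ℂ ω.1 p)
    (hB : DifferentiableAt ℂ ω.2 p) :
    formAt (lie P Q (f • ω)) p = f p • formAt (lie P Q ω) p + Xf P Q f p • formAt ω p := by
  have h1 : (f • ω).1 = fun q => f q * ω.1 q := rfl
  have h2 : (f • ω).2 = fun q => f q * ω.2 q := rfl
  ext <;> simp only [formAt, lie, h1, h2, Xf_mul hf hA, Xf_mul hf hB, Prod.fst_add, Prod.snd_add,
    Prod.smul_fst, Prod.smul_snd, smul_eq_mul] <;> ring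

theorem formAt_lie_inv_contr_smul_eq_zero (hA : DifferentiableAt ℂ ω.1 p)
    (hB : DifferentiableAt ℂ ω.2 p) (hP : DifferentiableAt ℂ P p) (hQ : DifferentiableAt ℂ Q p)
    (hwedge : wedge (lie P Q ω) ω p = 0) (hc : contr P Q ω p ≠ 0) :
    formAt (lie P Q ((fun q => (contr P Q ω q)⁻¹) • ω)) p = 0 := by
  have hcd := differentiableAt_contr hA hB hP hQ
  have hprop : Xf P Q (contr P Q ω) p • formAt ω p = contr P Q ω p • formAt (lie P Q ω) p := by
    rw [← contr_lie hA hB hP hQ]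
    exact contr_smul_formAt_eq_of_wedge_eq_zero hwedge
  have hlie : formAt (lie P Q ω) p = (Xf P Q (contr P Q ω) p / contr P Q ω p) • formAt ω p := by
    rw [div_eq_inv_mul, mul_smul, hprop, inv_smul_smul₀ hc]
  rw [formAt_lie_smul (hcd.fun_inv hc) hA hB, Xf_inv hcd hc, hlie, smul_smul, ← add_smul]
  convert zero_smul ℂ (formAt ω p)
  field_simp
  ring

theorem curl_eq_zero_of_formAt_lie_eq_zero (hA : DifferentiableAt ℂ ω.1 p)
    (hB : DifferentiableAt ℂ ω.2 p) (hP : DifferentiableAt ℂ P p) (hQ : DifferentiableAt ℂ Q p)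
    (hcontr : contr P Q ω =ᶠ[𝓝 p] fun _ => 1) (hlie : formAt (lie P Q ω) p = 0) :
    curl ω p = 0 := by
  have hd : formAt (fd (contr P Q ω)) p = 0 := by
    simp [formAt, fd, pdx, pdy, hcontr.fderiv_eq]
  rw [formAt_lie_eq_fd_contr_add hA hB hP hQ, hd, zero_add, smul_eq_zero] at hlie
  refine hlie.resolve_right fun hX => ?_
  have h1 := hcontr.self_of_nhds
  simp only [Prod.ext_iff, Prod.fst_zero, Prod.snd_zero, neg_eq_zero] at hX
  simp [contr, hX] at h1

end LieDerivative

theorem stmt_0_general (U : Set Pt) (hUopen : IsOpen U) (A B P Q : Pt → ℂ)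
    (hA : AnalyticOnNhd ℂ A U) (hB : AnalyticOnNhd ℂ B U)
    (hP : AnalyticOnNhd ℂ P U) (hQ : AnalyticOnNhd ℂ Q U)
    (hinf : ∀ p ∈ U, wedge (lie P Q (A, B)) (A, B) p = 0)
    (hnv : ∀ p ∈ U, contr P Q (A, B) p ≠ 0)
    (η : Form1)
    (hη : η = (fun p => A p / contr P Q (A, B) p, fun p => B p / contr P Q (A, B) p)) :
    IsClosedOn η U ∧ ∀ p ∈ U, (lie P Q η).1 p = 0 ∧ (lie P Q η).2 p = 0 := by
  set h := contr P Q (A, B)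
  have hη' : η = (fun q => (h q)⁻¹) • (A, B) := by
    subst hη
    ext q <;> simp [div_eq_inv_mul]
  have hlie : ∀ p ∈ U, formAt (lie P Q η) p = 0 := fun p hp => hη' ▸
    formAt_lie_inv_contr_smul_eq_zero (hA p hp).differentiableAt (hB p hp).differentiableAt
      (hP p hp).differentiableAt (hQ p hp).differentiableAt (hinf p hp) (hnv p hp)
  have hcontr : ∀ p ∈ U, contr P Q η =ᶠ[𝓝 p] fun _ => 1 := fun p hp => by
    filter_upwards [hUopen.mem_nhds hp] with q hq
    rw [hη', contr_smul]
    exact inv_mul_cancel₀ (hnv q hq)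
  refine ⟨fun p hp => ?_, fun p hp => Prod.ext_iff.1 (hlie p hp)⟩
  have hinv : DifferentiableAt ℂ (fun q => (h q)⁻¹) p :=
    (differentiableAt_contr (hA p hp).differentiableAt (hB p hp).differentiableAt
      (hP p hp).differentiableAt (hQ p hp).differentiableAt).fun_inv (hnv p hp)
  have hcurl := curl_eq_zero_of_formAt_lie_eq_zero
    (hη' ▸ hinv.fun_mul (hA p hp).differentiableAt) (hη' ▸ hinv.fun_mul (hB p hp).differentiableAt)
    (hP p hp).differentiableAt (hQ p hp).differentiableAt (hcontr p hp) (hlie p hp)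
  exact (sub_eq_zero.1 hcurl).symm

/-- If `ω = (A,B)` is a holomorphic 1-form and `X = (P,Q)` a holomorphic
vector field on an open connected `U ∋ 0` with `(L_X ω) ∧ ω = 0` and `i_X ω` nonvanishing
on `U`, then `η = ω / (i_X ω)` is closed and satisfies `L_X η = 0` on `U`. -/
theorem stmt_0 (U : Set Pt) (hUopen : IsOpen U) (hUconn : IsConnected U)
    (h0U : (0 : Pt) ∈ U) (A B P Q : Pt → ℂ)
    (hA : AnalyticOnNhd ℂ A U) (hB : AnalyticOnNhd ℂ B U)
    (hP : AnalyticOnNhd ℂ P U) (hQ : AnalyticOnNhd ℂ Q U)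
    (hinf : ∀ p ∈ U, wedge (lie P Q (A, B)) (A, B) p = 0)
    (hnv : ∀ p ∈ U, contr P Q (A, B) p ≠ 0)
    (η : Form1)
    (hη : η = (fun p => A p / contr P Q (A, B) p, fun p => B p / contr P Q (A, B) p)) :
    IsClosedOn η U ∧ ∀ p ∈ U, (lie P Q η).1 p = 0 ∧ (lie P Q η).2 p = 0 :=
  stmt_0_general U hUopen A B P Q hA hB hP hQ hinf hnv η hη
end
end

section
/- Let U ⊆ ℂ² be a polydisc centered at 0, let ω = (A,B) be a holomorphic 1-form on U and X = (P,Q) a holomorphic vector field on U such that (L_X ω) ∧ ω = 0 identically and i_X ω = A·P + B·Q is nonvanishing on U. Then there exists a holomorphic function u : U → ℂ with u(0) = 0, ∂u/∂x = A/(i_X ω) and ∂u/∂y = B/(i_X ω); consequently X(u) = 1 and du ∧ ω = 0 on U (u is the canonical first integral of ω with respect to X). -/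
open Complex Filter Topology

noncomputable section

/-- `U` is a polydisc centered at the origin. -/
def IsPolydisc (U : Set Pt) : Prop :=
  ∃ r s : ℝ, 0 < r ∧ 0 < s ∧ U = Metric.ball (0 : ℂ) r ×ˢ Metric.ball (0 : ℂ) s


/-!
The identity `∂(A/g)/∂y - ∂(B/g)/∂x = ((L_X ω) ∧ ω) / g²`, where `g = i_X ω`, shows that
`ω / i_X ω` is closed, so by the Poincaré lemma it has a primitive `u` on the convex polydisc,
normalized by `u 0 = 0`. The primitive is holomorphic: near each point `p` it equals
`u p + (∫₀¹ ω (p + t (y - p)) dt) (y - p)`, whose power series is obtained by integrating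
that of `ω` termwise. Finally `X(u) = i_X ω / i_X ω = 1` and `du ∧ ω = (ω ∧ ω) / i_X ω = 0`.
-/

open Set AffineMap MeasureTheory
open scoped ENNReal Interval

section

variable {E F : Type*} [NormedAddCommGroup E] [NormedSpace ℂ E]
  [NormedAddCommGroup F] [NormedSpace ℂ F] [CompleteSpace F]

theorem fderiv_div_apply {f g : E → ℂ} {p : E} (hf : DifferentiableAt ℂ f p)
    (hg : DifferentiableAt ℂ g p) (hgp : g p ≠ 0) (v : E) :
    fderiv ℂ (fun q => f q / g q) p v
      = (fderiv ℂ f p v * g p - f p * fderiv ℂ g p v) / g p ^ 2 := by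
  have hfg : (fun q => f q / g q * g q) =ᶠ[𝓝 p] f := by
    filter_upwards [hg.continuousAt.eventually_ne hgp] with q hq using div_mul_cancel₀ _ hq
  have hdiv : DifferentiableAt ℂ (fun q => f q / g q) p := by fun_prop (disch := exact hgp)
  have hprod := congrArg (· v) (fderiv_fun_mul hdiv hg)
  simp only [hfg.fderiv_eq, add_apply, smul_apply, smul_eq_mul] at hprod
  rw [eq_div_iff (pow_ne_zero 2 hgp)]
  linear_combination (-g p) * hprod - fderiv ℂ g p v * div_mul_cancel₀ (f p) hgp

theorem integral_ofReal_pow_smul (n : ℕ) (c : F) :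
    ∫ t in (0:ℝ)..1, (t : ℂ) ^ n • c = ((n + 1 : ℂ))⁻¹ • c := by
  rw [intervalIntegral.integral_smul_const]
  congr 1
  simp_rw [← Complex.ofReal_pow]
  rw [intervalIntegral.integral_ofReal, integral_pow]
  push_cast
  simp

theorem hasFPowerSeriesOnBall_integral_lineMap {ω : E → E →L[ℂ] F}
    {A : FormalMultilinearSeries ℂ E (E →L[ℂ] F)} {p : E} {r : ℝ≥0∞}
    (hω : HasFPowerSeriesOnBall ω A p r) :
    HasFPowerSeriesOnBall (fun y => ∫ t in (0:ℝ)..1, ω (lineMap p y t))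
      (fun n => ((n + 1 : ℂ))⁻¹ • A n) p r where
  r_le := by
    refine hω.r_le.trans (FormalMultilinearSeries.radius_le_of_le fun n => ?_)
    refine (norm_smul_le ((n + 1 : ℂ))⁻¹ (A n)).trans
      (mul_le_of_le_one_left (norm_nonneg _) ?_)
    rw [norm_inv, ← Nat.cast_add_one, Complex.norm_natCast]
    exact inv_le_one_of_one_le₀ (by exact_mod_cast n.succ_pos)
  r_pos := hω.r_pos
  hasSum := by
    intro y hy
    have hlim : ∀ t ∈ Ι (0:ℝ) 1,
        HasSum (fun n => (t : ℂ) ^ n • A n (fun _ => y)) (ω (lineMap p (p + y) t)) := by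
      intro t ht
      rw [uIoc_of_le zero_le_one] at ht
      have hty : (t : ℂ) • y ∈ Metric.eball (0 : E) r := by
        rw [Complex.coe_smul]
        exact (convex_eball 0 r).smul_mem_of_zero_mem (Metric.mem_eball_self hω.r_pos) hy
          (Ioc_subset_Icc_self ht)
      have hpt : lineMap p (p + y) t = p + (t : ℂ) • y := by
        rw [lineMap_apply, vsub_eq_sub, add_sub_cancel_left, vadd_eq_add, add_comm,
          Complex.coe_smul]
      have hterm : ∀ n, A n (fun _ => (t : ℂ) • y) = (t : ℂ) ^ n • A n (fun _ => y) :=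
        fun n => by simpa using (A n).map_smul_univ (fun _ => (t : ℂ)) (fun _ => y)
      simpa only [hpt, hterm] using hω.hasSum hty
    have hbound :
        ∀ n, ∀ t ∈ Ι (0:ℝ) 1, ‖(t : ℂ) ^ n • A n (fun _ => y)‖ ≤ ‖A n‖ * ‖y‖ ^ n := by
      intro n t ht
      rw [uIoc_of_le zero_le_one] at ht
      rw [norm_smul, norm_pow, Complex.norm_real, Real.norm_of_nonneg ht.1.le]
      refine mul_le_of_le_one_left (norm_nonneg _) (pow_le_one₀ ht.1.le ht.2) |>.trans ?_
      simpa using (A n).le_opNorm (fun _ => y)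
    have hcont : ∀ n, Continuous fun t : ℝ => (t : ℂ) ^ n • A n (fun _ => y) := fun n => by
      fun_prop
    have hsum : Summable fun n => ‖A n‖ * ‖y‖ ^ n := by
      have hy' : (‖y‖₊ : ℝ≥0∞) < A.radius := by
        rw [← enorm_eq_nnnorm, ← mem_eball_zero_iff]
        exact Metric.eball_subset_eball hω.r_le hy
      simpa using A.summable_norm_mul_pow hy'
    have hint := intervalIntegral.hasSum_integral_of_dominated_convergence
      (F := fun n (t : ℝ) => (t : ℂ) ^ n • A n (fun _ => y))
      (fun n _ => ‖A n‖ * ‖y‖ ^ n) (μ := volume) (a := 0) (b := 1)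
      (fun n => (hcont n).aestronglyMeasurable)
      (fun n => ae_of_all _ (hbound n)) (ae_of_all _ fun _ _ => hsum)
      intervalIntegrable_const (ae_of_all _ hlim)
    simp only [integral_ofReal_pow_smul] at hint
    exact hint

theorem Convex.eq_add_integral_lineMap_apply {f : E → F} {ω : E → E →L[ℂ] F} {s : Set E}
    (hs : Convex ℝ s) (hω : ContinuousOn ω s) (hf : ∀ x ∈ s, HasFDerivAt f (ω x) x)
    {p y : E} (hp : p ∈ s) (hy : y ∈ s) :
    f y = f p + (∫ t in (0:ℝ)..1, ω (lineMap p y t)) (y - p) := by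
  have hseg : ∀ t ∈ uIcc (0:ℝ) 1, lineMap p y t ∈ s := fun t ht => by
    rw [uIcc_of_le zero_le_one] at ht
    exact hs.lineMap_mem hp hy ht
  have hcont : ContinuousOn (fun t : ℝ => ω (lineMap p y t)) (uIcc 0 1) :=
    hω.comp (AffineMap.lineMap_continuous.continuousOn) hseg
  have hderiv : ∀ t ∈ uIcc (0:ℝ) 1,
      HasDerivAt (fun t : ℝ => f (lineMap p y t)) (ω (lineMap p y t) (y - p)) t := fun t ht =>
    ((hf _ (hseg t ht)).restrictScalars ℝ).comp_hasDerivAt t hasDerivAt_lineMap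
  rw [ContinuousLinearMap.intervalIntegral_apply hcont.intervalIntegrable,
    intervalIntegral.integral_eq_sub_of_hasDerivAt hderiv
      ((ContinuousLinearMap.apply ℂ F (y - p)).continuous.comp_continuousOn
        hcont).intervalIntegrable]
  simp

theorem HasFPowerSeriesOnBall.analyticAt_of_hasFDerivAt {f : E → F} {ω : E → E →L[ℂ] F}
    {A : FormalMultilinearSeries ℂ E (E →L[ℂ] F)} {p : E} {r : ℝ≥0∞}
    (hω : HasFPowerSeriesOnBall ω A p r)
    (hf : ∀ x ∈ Metric.eball p r, HasFDerivAt f (ω x) x) : AnalyticAt ℂ f p := by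
  refine ((hasFPowerSeriesOnBall_integral_lineMap hω).unshift (z := f p)).analyticAt.congr ?_
  filter_upwards [Metric.eball_mem_nhds p hω.r_pos] with y hy
  exact ((convex_eball p r).eq_add_integral_lineMap_apply hω.continuousOn hf
    (Metric.mem_eball_self hω.r_pos) hy).symm

theorem AnalyticOnNhd.of_hasFDerivAt {f : E → F} {ω : E → E →L[ℂ] F} {s : Set E}
    (hs : IsOpen s) (hω : AnalyticOnNhd ℂ ω s) (hf : ∀ x ∈ s, HasFDerivAt f (ω x) x) :
    AnalyticOnNhd ℂ f s := by
  intro p hp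
  obtain ⟨A, r, hA⟩ := hω p hp
  obtain ⟨ε, hε, hεs⟩ := EMetric.mem_nhds_iff.1 (hs.mem_nhds hp)
  refine (hA.mono (lt_min hA.r_pos hε) (min_le_left _ _)).analyticAt_of_hasFDerivAt fun x hx => ?_
  exact hf x (hεs (Metric.eball_subset_eball (min_le_right _ _) hx))

theorem Convex.exists_analyticOnNhd_hasFDerivAt_of_fderiv_symmetric {ω : E → E →L[ℂ] F}
    {s : Set E} (hs : Convex ℝ s) (hso : IsOpen s) (hω : AnalyticOnNhd ℂ ω s)
    (hsymm : ∀ x ∈ s, ∀ v w, fderiv ℂ ω x v w = fderiv ℂ ω x w v) (a : E) :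
    ∃ f : E → F, AnalyticOnNhd ℂ f s ∧ f a = 0 ∧ ∀ x ∈ s, HasFDerivAt f (ω x) x := by
  obtain ⟨f, hf⟩ := hs.exists_forall_hasFDerivAt_of_fderiv_symmetric hso
    (hω.differentiableOn.restrictScalars ℝ) fun x hx v w => by
      rw [(hω x hx).differentiableAt.fderiv_restrictScalars ℝ]
      exact hsymm x hx v w
  have hf' : ∀ x ∈ s, HasFDerivAt (fun y => f y - f a) (ω x) x := fun x hx =>
    (hf x hx).sub_const _
  exact ⟨_, hω.of_hasFDerivAt hso hf', sub_self _, hf'⟩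

end

theorem fderiv_contr_apply {A B P Q : Pt → ℂ} {p : Pt} (hA : DifferentiableAt ℂ A p)
    (hB : DifferentiableAt ℂ B p) (hP : DifferentiableAt ℂ P p) (hQ : DifferentiableAt ℂ Q p)
    (v : Pt) :
    fderiv ℂ (contr P Q (A, B)) p v = fderiv ℂ A p v * P p + A p * fderiv ℂ P p v
      + (fderiv ℂ B p v * Q p + B p * fderiv ℂ Q p v) := by
  have h := (hA.hasFDerivAt.mul hP.hasFDerivAt).add (hB.hasFDerivAt.mul hQ.hasFDerivAt)
  rw [show contr P Q (A, B) = A * P + B * Q from rfl, h.fderiv]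
  simp only [add_apply, smul_apply, smul_eq_mul]
  ring

theorem pdy_div_contr_sub_pdx_div_contr {A B P Q : Pt → ℂ} {p : Pt}
    (hA : DifferentiableAt ℂ A p) (hB : DifferentiableAt ℂ B p) (hP : DifferentiableAt ℂ P p)
    (hQ : DifferentiableAt ℂ Q p) (hg : contr P Q (A, B) p ≠ 0) :
    pdy (fun q => A q / contr P Q (A, B) q) p - pdx (fun q => B q / contr P Q (A, B) q) p
      = wedge (lie P Q (A, B)) (A, B) p / contr P Q (A, B) p ^ 2 := by
  have hgd : DifferentiableAt ℂ (contr P Q (A, B)) p := by unfold contr; fun_prop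
  simp only [pdx, pdy, fderiv_div_apply hA hgd hg, fderiv_div_apply hB hgd hg,
    fderiv_contr_apply hA hB hP hQ, wedge, lie, Xf]
  rw [div_sub_div_same]
  congr 1
  simp only [contr]
  ring

theorem fderiv_apply_eq_pdx_pdy (f : Pt → ℂ) (p v : Pt) :
    fderiv ℂ f p v = v.1 * pdx f p + v.2 * pdy f p := by
  have hv : v = v.1 • ((1 : ℂ), (0 : ℂ)) + v.2 • ((0 : ℂ), (1 : ℂ)) := by simp
  conv_lhs => rw [hv]
  rw [map_add, map_smul, map_smul, smul_eq_mul, smul_eq_mul, pdx, pdy]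

def Form1.toCLM (ω : Form1) (p : Pt) : Pt →L[ℂ] ℂ :=
  ω.1 p • ContinuousLinearMap.fst ℂ ℂ ℂ + ω.2 p • ContinuousLinearMap.snd ℂ ℂ ℂ

theorem Form1.toCLM_apply (ω : Form1) (p v : Pt) : ω.toCLM p v = ω.1 p * v.1 + ω.2 p * v.2 :=
  rfl

theorem AnalyticForm.analyticOnNhd_toCLM {ω : Form1} {U : Set Pt} (hω : AnalyticForm ω U) :
    AnalyticOnNhd ℂ ω.toCLM U := fun p hp =>
  ((hω.1 p hp).smul analyticAt_const).add ((hω.2 p hp).smul analyticAt_const)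

theorem Form1.fderiv_toCLM_symm {ω : Form1} {p : Pt} (h₁ : DifferentiableAt ℂ ω.1 p)
    (h₂ : DifferentiableAt ℂ ω.2 p) (hc : pdy ω.1 p = pdx ω.2 p) (v w : Pt) :
    fderiv ℂ ω.toCLM p v w = fderiv ℂ ω.toCLM p w v := by
  have hd : ∀ v w : Pt,
      fderiv ℂ ω.toCLM p v w = fderiv ℂ ω.1 p v * w.1 + fderiv ℂ ω.2 p v * w.2 := by
    intro v w
    have h : HasFDerivAt ω.toCLM _ p :=
      (h₁.hasFDerivAt.smul_const (ContinuousLinearMap.fst ℂ ℂ ℂ)).add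
        (h₂.hasFDerivAt.smul_const (ContinuousLinearMap.snd ℂ ℂ ℂ))
    rw [h.fderiv]
    simp
  rw [hd, hd, fderiv_apply_eq_pdx_pdy ω.1, fderiv_apply_eq_pdx_pdy ω.1,
    fderiv_apply_eq_pdx_pdy ω.2, fderiv_apply_eq_pdx_pdy ω.2]
  linear_combination (v.2 * w.1 - v.1 * w.2) * hc

theorem HasFDerivAt.pdx_eq {u : Pt → ℂ} {ω : Form1} {p : Pt}
    (h : HasFDerivAt u (ω.toCLM p) p) :
    pdx u p = ω.1 p := by
  simp [pdx, h.fderiv, Form1.toCLM_apply]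

theorem HasFDerivAt.pdy_eq {u : Pt → ℂ} {ω : Form1} {p : Pt}
    (h : HasFDerivAt u (ω.toCLM p) p) :
    pdy u p = ω.2 p := by
  simp [pdy, h.fderiv, Form1.toCLM_apply]

theorem IsPolydisc.isOpen {U : Set Pt} (hU : IsPolydisc U) : IsOpen U := by
  obtain ⟨r, s, -, -, rfl⟩ := hU
  exact Metric.isOpen_ball.prod Metric.isOpen_ball

theorem IsPolydisc.convex {U : Set Pt} (hU : IsPolydisc U) : Convex ℝ U := by
  obtain ⟨r, s, -, -, rfl⟩ := hU
  exact (convex_ball 0 r).prod (convex_ball 0 s)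

/-- On a polydisc `U` centered at `0`, if `ω = (A,B)` is a holomorphic
1-form and `X = (P,Q)` a holomorphic vector field with `(L_X ω) ∧ ω = 0` and `i_X ω`
nonvanishing on `U`, then there is a holomorphic `u : U → ℂ` with `u(0) = 0` and
`du = ω / (i_X ω)`; consequently `X(u) = 1` and `du ∧ ω = 0` on `U`. -/
theorem stmt_1 (U : Set Pt) (hU : IsPolydisc U) (A B P Q : Pt → ℂ)
    (hA : AnalyticOnNhd ℂ A U) (hB : AnalyticOnNhd ℂ B U)
    (hP : AnalyticOnNhd ℂ P U) (hQ : AnalyticOnNhd ℂ Q U)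
    (hinf : ∀ p ∈ U, wedge (lie P Q (A, B)) (A, B) p = 0)
    (hnv : ∀ p ∈ U, contr P Q (A, B) p ≠ 0) :
    ∃ u : Pt → ℂ, AnalyticOnNhd ℂ u U ∧ u 0 = 0 ∧
      (∀ p ∈ U, pdx u p = A p / contr P Q (A, B) p ∧ pdy u p = B p / contr P Q (A, B) p) ∧
      (∀ p ∈ U, Xf P Q u p = 1 ∧ wedge (fd u) (A, B) p = 0) := by
  set g := contr P Q (A, B) with hg_def
  set ω : Form1 := (fun q => A q / g q, fun q => B q / g q)
  have hg : AnalyticOnNhd ℂ g U := (hA.mul hP).add (hB.mul hQ)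
  have hω : AnalyticForm ω U := ⟨hA.div hg hnv, hB.div hg hnv⟩
  have hclosed : IsClosedOn ω U := fun p hp => by
    have h := pdy_div_contr_sub_pdx_div_contr (hA p hp).differentiableAt
      (hB p hp).differentiableAt (hP p hp).differentiableAt (hQ p hp).differentiableAt (hnv p hp)
    rwa [hinf p hp, zero_div, sub_eq_zero] at h
  obtain ⟨u, hu, hu0, hdu⟩ := hU.convex.exists_analyticOnNhd_hasFDerivAt_of_fderiv_symmetric
    hU.isOpen hω.analyticOnNhd_toCLM
      (fun p hp => Form1.fderiv_toCLM_symm (hω.1 p hp).differentiableAt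
        (hω.2 p hp).differentiableAt (hclosed p hp)) 0
  have hdx : ∀ p ∈ U, pdx u p = A p / g p := fun p hp => (hdu p hp).pdx_eq
  have hdy : ∀ p ∈ U, pdy u p = B p / g p := fun p hp => (hdu p hp).pdy_eq
  refine ⟨u, hu, hu0, fun p hp => ⟨hdx p hp, hdy p hp⟩, fun p hp => ⟨?_, ?_⟩⟩
  · rw [Xf, hdx p hp, hdy p hp, mul_div_assoc', mul_div_assoc', ← add_div,
      div_eq_one_iff_eq (hnv p hp), hg_def, contr]
    ring
  · simp only [wedge, fd, hdx p hp, hdy p hp]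
    ring
end
end
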